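/- arXiv:1610.04499 — 3 statements merged into one kernel-verified Lean document; each statement's English description precedes it below -/
import Mathlib

section
/- Let n ≥ 2 and let G be a finite simple graph of order n such that every pair of distinct nonadjacent vertices x, y satisfies d(x) + d(y) ≥ n. Then m(G,2) = 2, i.e., there is a set of exactly two vertices from which G 2-percolates. -/
open Finset
open scoped Classical

/-- One step of the `r`-neighbor bootstrap percolation process: all currently
active vertices stay active, and every vertex with at least `r` active
neighbors becomes active. -/
noncomputable def bootStep {V : Type*} [Fintype V] (G : SimpleGraph V) (r : ℕ)
    (A : Finset V) : Finset V :=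
  A ∪ Finset.univ.filter (fun v => r ≤ (G.neighborFinset v ∩ A).card)

/-- The closure of `A` under `r`-neighbor bootstrap percolation, i.e. `⋃ₜ Aₜ`.
Since the process is monotone on a finite vertex set, iterating `|V|` times
reaches the fixed point. -/
noncomputable def bootClosure {V : Type*} [Fintype V] (G : SimpleGraph V) (r : ℕ)
    (A : Finset V) : Finset V :=
  (bootStep G r)^[Fintype.card V] A

/-- `G` `r`-percolates from the initially active set `A`. -/
def Percolates {V : Type*} [Fintype V] (G : SimpleGraph V) (r : ℕ)
    (A : Finset V) : Prop :=
  ∃ t : ℕ, (bootStep G r)^[t] A = Finset.univ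

/-- `m(G, r)`: the minimum size of an `r`-contagious set in `G`. -/
noncomputable def minContagious {V : Type*} [Fintype V] (G : SimpleGraph V) (r : ℕ) : ℕ :=
  sInf {k : ℕ | ∃ A : Finset V, A.card = k ∧ Percolates G r A}

/-! Let `A` be a set that the 2-neighbour process cannot enlarge, containing a non-adjacent pair
`u, v` but missing some vertex, and let `B` be its complement. Every vertex of `B` has at most one
neighbour in `A`, so there are at most `|B|` edges between `A` and `B`, and every vertex of `B` has
degree at most `|B|`. Against that, the Ore condition gives every vertex of `A` a neighbour in `B`,
and gives `u` and `v` together at least `|B| - |A| + 4` of them: at least `|B| + 2` edges in all.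
As the process stabilises, a non-adjacent pair (any pair, if `G` is complete) therefore
percolates, while fewer than two vertices never spread. -/

section

variable {V : Type*} [Fintype V] {G : SimpleGraph V} {r : ℕ} {A : Finset V}

namespace SimpleGraph

def OreCondition (G : SimpleGraph V) : Prop :=
  ∀ x y : V, x ≠ y → ¬ G.Adj x y → Fintype.card V ≤ G.degree x + G.degree y

theorem card_neighborFinset_inter_lt {s : Finset V} {w : V} (hw : w ∈ s) :
    #(G.neighborFinset w ∩ s) < #s :=
  card_lt_card <| inter_subset_right.ssubset_of_not_subset fun h => by simpa using h hw

theorem card_neighborFinset_inter_add_two_le {s : Finset V} {u v : V} (huvs : {u, v} ⊆ s)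
    (huv : u ≠ v) (hadj : ¬ G.Adj u v) : #(G.neighborFinset u ∩ s) + 2 ≤ #s := by
  have hsub : G.neighborFinset u ∩ s ⊆ s \ {u, v} := by
    intro w hw
    simp only [mem_inter, mem_neighborFinset] at hw
    simp only [mem_sdiff, mem_insert, mem_singleton, hw.2, true_and]
    rintro (rfl | rfl)
    exacts [G.irrefl hw.1, hadj hw.1]
  have hcard := card_le_card hsub
  rw [card_sdiff_of_subset huvs, card_pair huv] at hcard
  have := card_le_card huvs
  rw [card_pair huv] at this
  omega

theorem degree_eq_card_inter_add_card_inter_compl (s : Finset V) (w : V) :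
    G.degree w = #(G.neighborFinset w ∩ s) + #(G.neighborFinset w ∩ sᶜ) := by
  rw [← card_neighborFinset_eq_degree, ← sdiff_eq_inter_compl, card_inter_add_card_sdiff]

theorem sum_card_neighborFinset_inter_comm (s t : Finset V) :
    ∑ a ∈ s, #(G.neighborFinset a ∩ t) = ∑ b ∈ t, #(G.neighborFinset b ∩ s) := by
  convert sum_card_bipartiteAbove_eq_sum_card_bipartiteBelow (s := s) (t := t) G.Adj using 3 <;>
    ext <;> simp [bipartiteAbove, bipartiteBelow, G.adj_comm, and_comm]

end SimpleGraph

open SimpleGraph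

theorem subset_bootStep : A ⊆ bootStep G r A :=
  subset_union_left

theorem mem_of_bootStep_eq_self (hA : bootStep G r A = A) {w : V}
    (hw : r ≤ #(G.neighborFinset w ∩ A)) : w ∈ A := by
  rw [← hA]
  exact mem_union_right _ (mem_filter.2 ⟨mem_univ _, hw⟩)

theorem card_neighborFinset_inter_lt_of_bootStep_eq_self (hA : bootStep G r A = A) {w : V}
    (hw : w ∉ A) : #(G.neighborFinset w ∩ A) < r :=
  not_le.1 fun h => hw (mem_of_bootStep_eq_self hA h)

theorem bootStep_eq_self_of_card_lt (hA : #A < r) : bootStep G r A = A := by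
  refine union_eq_left.2 fun w hw => ?_
  have := card_le_card (inter_subset_right (s₁ := G.neighborFinset w) (s₂ := A))
  have := (mem_filter.1 hw).2
  omega

theorem Percolates.eq_univ_of_card_lt (hA : Percolates G r A) (hcard : #A < r) : A = univ := by
  obtain ⟨t, ht⟩ := hA
  rwa [Function.iterate_fixed (bootStep_eq_self_of_card_lt hcard)] at ht

theorem percolates_of_forall_bootStep_eq_self
    (h : ∀ B, A ⊆ B → bootStep G r B = B → B = univ) : Percolates G r A := by
  let iter : ℕ →o Finset V :=
    ⟨fun t => (bootStep G r)^[t] A, monotone_nat_of_le_succ fun t => by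
      rw [Function.iterate_succ_apply']; exact subset_bootStep⟩
  obtain ⟨N, hN⟩ := WellFoundedGT.monotone_chain_condition iter
  refine ⟨N, h _ ?_ ?_⟩
  · simpa [iter] using iter.mono (Nat.zero_le N)
  · have := hN (N + 1) N.le_succ
    simp only [iter, OrderHom.coe_mk, Function.iterate_succ_apply'] at this
    exact this.symm

theorem degree_add_two_le_of_bootStep_eq_self (hA : bootStep G r A = A) {b : V} (hb : b ∉ A) :
    G.degree b + 2 ≤ r + #Aᶜ := by
  have := card_neighborFinset_inter_lt_of_bootStep_eq_self hA hb
  have := card_neighborFinset_inter_lt (G := G) (mem_compl.2 hb)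
  rw [degree_eq_card_inter_add_card_inter_compl A]
  omega

theorem nonempty_neighborFinset_inter_compl_of_ore (hore : G.OreCondition)
    (hA : bootStep G 2 A = A) {a b : V} (ha : a ∈ A) (hb : b ∉ A) :
    (G.neighborFinset a ∩ Aᶜ).Nonempty := by
  by_contra hempty
  have hab : ¬ G.Adj a b := fun hab =>
    hempty ⟨b, mem_inter.2 ⟨(G.mem_neighborFinset _ _).2 hab, mem_compl.2 hb⟩⟩
  have hdega := degree_eq_card_inter_add_card_inter_compl (G := G) A a
  rw [not_nonempty_iff_eq_empty.1 hempty, card_empty] at hdega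
  have := hore a b (by rintro rfl; exact hb ha) hab
  have := card_neighborFinset_inter_lt (G := G) ha
  have := degree_add_two_le_of_bootStep_eq_self hA hb
  have := card_add_card_compl A
  omega

theorem eq_univ_of_bootStep_eq_self_of_ore (hore : G.OreCondition)
    (hA : bootStep G 2 A = A) {u v : V} (huvA : {u, v} ⊆ A) (huv : u ≠ v)
    (hadj : ¬ G.Adj u v) : A = univ := by
  by_contra hne
  obtain ⟨b, hb⟩ : ∃ b, b ∉ A := by simpa [Finset.eq_univ_iff_forall] using hne
  have hpair : #A + #Aᶜ + 4 ≤ 2 * #A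
      + (#(G.neighborFinset u ∩ Aᶜ) + #(G.neighborFinset v ∩ Aᶜ)) := by
    have hore_uv := hore u v huv hadj
    rw [degree_eq_card_inter_add_card_inter_compl A u,
      degree_eq_card_inter_add_card_inter_compl A v, ← card_add_card_compl A] at hore_uv
    have := card_neighborFinset_inter_add_two_le huvA huv hadj
    have := card_neighborFinset_inter_add_two_le (pair_comm u v ▸ huvA) huv.symm
      fun h => hadj h.symm
    omega
  have hrest : #(A \ {u, v}) ≤ ∑ a ∈ A \ {u, v}, #(G.neighborFinset a ∩ Aᶜ) := by
    refine (card_eq_sum_ones _).trans_le (sum_le_sum fun a ha => ?_)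
    exact card_pos.2 (nonempty_neighborFinset_inter_compl_of_ore hore hA (mem_sdiff.1 ha).1 hb)
  have hedges : ∑ a ∈ A, #(G.neighborFinset a ∩ Aᶜ) ≤ #Aᶜ := by
    rw [sum_card_neighborFinset_inter_comm]
    refine (sum_le_sum fun b hb => ?_).trans_eq (card_eq_sum_ones _).symm
    exact Nat.le_of_lt_succ (card_neighborFinset_inter_lt_of_bootStep_eq_self hA (mem_compl.1 hb))
  rw [← sum_sdiff huvA, sum_pair huv] at hedges
  rw [card_sdiff_of_subset huvA, card_pair huv] at hrest
  have := card_le_card huvA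
  rw [card_pair huv] at this
  omega

theorem eq_univ_of_bootStep_eq_self_of_forall_adj (hcomplete : ∀ x y : V, x ≠ y → G.Adj x y)
    (hA : bootStep G 2 A = A) {u v : V} (huvA : {u, v} ⊆ A) (huv : u ≠ v) : A = univ := by
  refine Finset.eq_univ_iff_forall.2 fun w => by_contra fun hw => hw (mem_of_bootStep_eq_self hA ?_)
  have hsub : {u, v} ⊆ G.neighborFinset w ∩ A := fun x hx =>
    mem_inter.2 ⟨(G.mem_neighborFinset _ _).2 (hcomplete _ _ fun h => hw (h ▸ huvA hx)), huvA hx⟩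
  simpa [card_pair huv] using card_le_card hsub

end

/-- Ore-type condition: if `n ≥ 2` and every pair of distinct nonadjacent
vertices has degree sum at least `n`, then `m(G, 2) = 2`. -/
theorem stmt0 {V : Type*} [Fintype V] (G : SimpleGraph V)
    (hn : 2 ≤ Fintype.card V)
    (hdeg : ∀ x y : V, x ≠ y → ¬ G.Adj x y →
      Fintype.card V ≤ G.degree x + G.degree y) :
    minContagious G 2 = 2 := by
  obtain ⟨u, v, huv, hpair⟩ : ∃ u v : V, u ≠ v ∧ Percolates G 2 {u, v} := by
    by_cases hcomplete : ∀ x y : V, x ≠ y → G.Adj x y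
    · obtain ⟨u, v, huv⟩ := Fintype.exists_pair_of_one_lt_card hn
      exact ⟨u, v, huv, percolates_of_forall_bootStep_eq_self fun B hB hclosed =>
        eq_univ_of_bootStep_eq_self_of_forall_adj hcomplete hclosed hB huv⟩
    · push Not at hcomplete
      obtain ⟨u, v, huv, hadj⟩ := hcomplete
      exact ⟨u, v, huv, percolates_of_forall_bootStep_eq_self fun B hB hclosed =>
        eq_univ_of_bootStep_eq_self_of_ore hdeg hclosed hB huv hadj⟩
  refine IsLeast.csInf_eq ⟨⟨{u, v}, card_pair huv, hpair⟩, ?_⟩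
  rintro _ ⟨A, rfl, hA⟩
  by_contra! hcard
  have := congrArg card (hA.eq_univ_of_card_lt hcard)
  rw [card_univ] at this
  omega
end

section
/- Let G be a finite simple graph of order n ≥ 2 such that every pair of distinct nonadjacent vertices x, y satisfies d(x) + d(y) ≥ n − 1. If G is not isomorphic to the 5-cycle C₅, then m(G,2) = 2. -/
open Finset
open scoped Classical

/-!
The lower bound is immediate: from fewer than two active vertices nothing ever becomes active.

For the upper bound we prove, by strong induction on `|S|`, that every `S` with `|S| ≥ 2` on
which `G[S]` satisfies the degree condition and is not `C₅` is percolated, inside `S`, by a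
pair. Take a pair whose closure `B` is as large as possible and let `C = S \ B`. Every vertex
of `C` has at most one neighbour in `B`, hence at most `|C|` neighbours in `S`, so by the degree
condition a vertex of `B` missing some vertex of `C` has at least `|B| - 1` neighbours in `S`.
* If some vertex of `C` has fewer than `|C|` neighbours in `S`, then every vertex of `B` has a
  neighbour in `C`; `C` inherits the hypotheses, and the pair spanning `C` spans exactly `C` in
  `S`. Maximality of `B` and double counting then make `B` a clique perfectly matched with
  `C`, and a pair with one vertex on each side spans `S`.
* Otherwise `C` is a clique each of whose vertices has exactly one neighbour in `B`, some
  `b₀ ∈ B` has no neighbour in `C`, and a pair `{c, b₀}` with `c ∈ C` spans `S`, except when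
  `|C| = 2`, `|B| = 3` and `G[S]` is a `5`-cycle.
-/

lemma Finset.pair_subset {α : Type*} [DecidableEq α] {s : Finset α} {a b : α} (ha : a ∈ s)
    (hb : b ∈ s) : {a, b} ⊆ s :=
  insert_subset ha (singleton_subset_iff.2 hb)

lemma Finset.iterate_card_fixed {V : Type*} [Fintype V] (f : Finset V → Finset V)
    (hf : ∀ X, X ⊆ f X) (A : Finset V) : f (f^[Fintype.card V] A) = f^[Fintype.card V] A := by
  have key : ∀ t, t ≤ #(f^[t] A) ∨ f (f^[t] A) = f^[t] A := by
    intro t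
    induction t with
    | zero => simp
    | succ t ih =>
      rw [Function.iterate_succ_apply']
      by_cases hfix : f (f^[t] A) = f^[t] A
      · exact .inr (by rw [hfix, hfix])
      · have := card_lt_card ((hf _).ssubset_of_ne (Ne.symm hfix))
        have := ih.resolve_right hfix
        exact .inl (by omega)
  rcases key (Fintype.card V) with h | h
  · have huniv := eq_univ_of_card _ (le_antisymm (card_le_univ _) h)
    rw [huniv]
    exact eq_univ_of_forall fun v => hf _ (mem_univ v)
  · exact h

namespace SimpleGraph

variable {V : Type*} [Fintype V] {G : SimpleGraph V}

noncomputable def degIn (G : SimpleGraph V) (S : Finset V) (v : V) : ℕ :=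
  #(G.neighborFinset v ∩ S)

section degIn

variable {S B T : Finset V} {v x y : V}

lemma degIn_univ (v : V) : G.degIn univ v = G.degree v := by
  simp [degIn]

lemma degIn_mono (h : S ⊆ B) (v : V) : G.degIn S v ≤ G.degIn B v :=
  card_le_card (inter_subset_inter_left h)

lemma degIn_eq_add_degIn_sdiff (h : B ⊆ S) (v : V) :
    G.degIn S v = G.degIn B v + G.degIn (S \ B) v := by
  rw [degIn, degIn, degIn, ← card_union_of_disjoint
    (disjoint_sdiff.mono inter_subset_right inter_subset_right),
    ← inter_union_distrib_left, union_sdiff_of_subset h]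

lemma sum_degIn_comm (B C : Finset V) :
    ∑ b ∈ B, G.degIn C b = ∑ c ∈ C, G.degIn B c := by
  have h : ∀ (X : Finset V) (v : V), G.neighborFinset v ∩ X = X.bipartiteAbove G.Adj v := by
    intro X v
    ext
    simp [bipartiteAbove, and_comm]
  simp only [degIn, h]
  rw [sum_card_bipartiteAbove_eq_sum_card_bipartiteBelow]
  refine sum_congr rfl fun c _ => ?_
  simp only [bipartiteBelow, bipartiteAbove, G.adj_comm]

lemma two_le_degIn (hx : x ∈ S) (hy : y ∈ S) (hxy : x ≠ y) (hvx : G.Adj v x) (hvy : G.Adj v y) :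
    2 ≤ G.degIn S v := by
  rw [← card_pair hxy]
  exact card_le_card (pair_subset (by simp [hvx, hx]) (by simp [hvy, hy]))

lemma eq_of_adj_of_degIn_le_one (h : G.degIn S v ≤ 1) (hx : x ∈ S) (hy : y ∈ S)
    (hvx : G.Adj v x) (hvy : G.Adj v y) : x = y := by
  by_contra hxy
  have := two_le_degIn hx hy hxy hvx hvy
  omega

lemma exists_adj_of_degIn_pos (h : 0 < G.degIn S v) : ∃ x ∈ S, G.Adj v x := by
  obtain ⟨x, hx⟩ := card_pos.1 h
  rw [mem_inter, mem_neighborFinset] at hx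
  exact ⟨x, hx.2, hx.1⟩

lemma degIn_pos_of_adj (hx : x ∈ S) (h : G.Adj v x) : 0 < G.degIn S v :=
  card_pos.2 ⟨x, mem_inter.2 ⟨(G.mem_neighborFinset v x).2 h, hx⟩⟩

lemma exists_not_adj_of_degIn_lt (h : G.degIn S v < #S) : ∃ x ∈ S, ¬ G.Adj v x := by
  by_contra! hall
  refine h.not_ge (card_le_card fun x hx => ?_)
  simp [hx, hall x hx]

lemma degIn_eq_zero_of_forall_not_adj (h : ∀ x ∈ S, ¬ G.Adj v x) : G.degIn S v = 0 := by
  by_contra hv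
  obtain ⟨x, hx, hvx⟩ := exists_adj_of_degIn_pos (Nat.pos_of_ne_zero hv)
  exact h x hx hvx

lemma degIn_add_card_le (hT : T ⊆ S) (h : ∀ t ∈ T, ¬ G.Adj v t) : G.degIn S v + #T ≤ #S := by
  have hsub : G.neighborFinset v ∩ S ⊆ S \ T := fun t ht => by
    rw [mem_inter, mem_neighborFinset] at ht
    exact mem_sdiff.2 ⟨ht.2, fun htT => h t htT ht.1⟩
  have := card_le_card hsub
  rw [card_sdiff_of_subset hT] at this
  have := card_le_card hT
  unfold degIn
  omega

lemma degIn_add_card_lt (hv : v ∈ S) (hT : T ⊆ S) (hvT : v ∉ T)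
    (h : ∀ t ∈ T, ¬ G.Adj v t) : G.degIn S v + #T < #S := by
  have := degIn_add_card_le (insert_subset hv hT) (forall_mem_insert _ _ _ |>.2 ⟨G.irrefl, h⟩)
  rwa [card_insert_of_notMem hvT, ← add_assoc, Nat.add_one_le_iff] at this

lemma degIn_lt_card (hv : v ∈ S) : G.degIn S v < #S := by
  simpa using degIn_add_card_lt (G := G) hv (empty_subset S) (notMem_empty v) (by simp)

lemma adj_of_card_le_degIn_add_one (hv : v ∈ S) (h : #S ≤ G.degIn S v + 1) (hy : y ∈ S)
    (hyv : y ≠ v) : G.Adj v y := by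
  by_contra hvy
  have := degIn_add_card_lt hv (singleton_subset_iff.2 hy) (by simpa using hyv.symm)
    (by simpa using hvy)
  rw [card_singleton] at this
  omega

lemma adj_or_adj_of_card_le_degIn_add_two (hv : v ∈ S) (h : #S ≤ G.degIn S v + 2)
    (hx : x ∈ S) (hy : y ∈ S) (hxy : x ≠ y) (hxv : x ≠ v) (hyv : y ≠ v) :
    G.Adj v x ∨ G.Adj v y := by
  by_contra! hn
  have := degIn_add_card_lt (T := {x, y}) hv (pair_subset hx hy)
    (by simp [hxv.symm, hyv.symm]) (by simpa using hn)
  rw [card_pair hxy] at this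
  omega

end degIn

section cycle

variable {d : ℕ} {T : Finset V} {v a b c x y : V}

lemma IsRegularOfDegree.neighborFinset_eq_pair (hG : G.IsRegularOfDegree 2) (hx : G.Adj v x)
    (hy : G.Adj v y) (hxy : x ≠ y) : G.neighborFinset v = {x, y} := by
  refine (eq_of_subset_of_card_le (pair_subset ?_ ?_) ?_).symm
  · exact (G.mem_neighborFinset v x).2 hx
  · exact (G.mem_neighborFinset v y).2 hy
  · rw [card_neighborFinset_eq_degree, hG.degree_eq, card_pair hxy]

lemma IsRegularOfDegree.exists_neighborFinset_eq_pair (hG : G.IsRegularOfDegree 2)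
    (hx : G.Adj v x) : ∃ y, y ≠ x ∧ G.Adj v y ∧ G.neighborFinset v = {x, y} := by
  have h2 : 1 < #(G.neighborFinset v) := by rw [card_neighborFinset_eq_degree, hG.degree_eq]; omega
  obtain ⟨y, hy, hyx⟩ := exists_mem_ne h2 x
  have hvy := (G.mem_neighborFinset v y).1 hy
  exact ⟨y, hyx, hvy, hG.neighborFinset_eq_pair hx hvy hyx.symm⟩

/-- A vertex outside a set closed under taking neighbours has all its `d` neighbours outside too. -/
lemma IsRegularOfDegree.card_add_lt (hG : G.IsRegularOfDegree d)
    (hT : ∀ t ∈ T, G.neighborFinset t ⊆ T) (hTV : T ≠ univ) : #T + d < Fintype.card V := by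
  obtain ⟨r, -, hr⟩ := exists_of_ssubset (ssubset_univ_iff.2 hTV)
  have := degIn_add_card_lt (G := G) (mem_univ r) (subset_univ T) hr
    fun t ht hrt => hr (hT t ht ((G.mem_neighborFinset t r).2 hrt.symm))
  rwa [degIn_univ, hG.degree_eq, card_univ, add_comm d] at this

lemma IsRegularOfDegree.not_adj_of_card_eq_five (hG : G.IsRegularOfDegree 2)
    (hV : Fintype.card V = 5) (ha : G.Adj v a) (hb : G.Adj v b) (hab : a ≠ b) : ¬ G.Adj a b := by
  intro hab'
  have hT : ∀ t ∈ ({v, a, b} : Finset V), G.neighborFinset t ⊆ {v, a, b} := by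
    simp only [mem_insert, mem_singleton, forall_eq_or_imp, forall_eq,
      hG.neighborFinset_eq_pair ha hb hab, hG.neighborFinset_eq_pair ha.symm hab' hb.ne,
      hG.neighborFinset_eq_pair hb.symm hab'.symm ha.ne]
    simp [insert_subset_iff]
  have h3 : #({v, a, b} : Finset V) = 3 := card_eq_three.2 ⟨v, a, b, ha.ne, hb.ne, hab, rfl⟩
  have := hG.card_add_lt hT (by rintro h; rw [h, card_univ] at h3; omega)
  omega

lemma IsRegularOfDegree.eq_of_card_eq_five (hG : G.IsRegularOfDegree 2)
    (hV : Fintype.card V = 5) (ha : G.Adj v a) (hb : G.Adj v b) (hab : a ≠ b) (hac : G.Adj a c)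
    (hbc : G.Adj b c) : c = v := by
  by_contra hcv
  have hT : ∀ t ∈ ({v, a, b, c} : Finset V), G.neighborFinset t ⊆ {v, a, b, c} := by
    simp only [mem_insert, mem_singleton, forall_eq_or_imp, forall_eq,
      hG.neighborFinset_eq_pair ha hb hab, hG.neighborFinset_eq_pair ha.symm hac (Ne.symm hcv),
      hG.neighborFinset_eq_pair hb.symm hbc (Ne.symm hcv),
      hG.neighborFinset_eq_pair hac.symm hbc.symm hab]
    simp [insert_subset_iff]
  have h4 : #({v, a, b, c} : Finset V) = 4 := by
    rw [card_insert_of_notMem (by simp [ha.ne, hb.ne, Ne.symm hcv]),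
      card_eq_three.2 ⟨a, b, c, hab, hac.ne, hbc.ne, rfl⟩]
  have := hG.card_add_lt hT (by rintro h; rw [h, card_univ] at h4; omega)
  omega

lemma iso_cycleGraph_of_adj_add_one {n : ℕ} (hG : G.IsRegularOfDegree 2) (e : Fin (n + 3) ≃ V)
    (h : ∀ i, G.Adj (e i) (e (i + 1))) : Nonempty (G ≃g cycleGraph (n + 3)) := by
  refine ⟨RelIso.symm ⟨e, fun {i j} => ⟨fun hij => ?_, fun hij => ?_⟩⟩⟩
  · have hN := hG.neighborFinset_eq_pair (h i) (by simpa using (h (i - 1)).symm)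
      (e.injective.ne (by
        rw [Ne, eq_sub_iff_add_eq, add_assoc, add_eq_left, Fin.ext_iff]
        simp [Fin.val_add, Nat.mod_eq_of_lt (show 2 < n + 3 by omega)]))
    have := (G.mem_neighborFinset _ _).2 hij
    rw [hN, mem_insert, mem_singleton, e.apply_eq_iff_eq, e.apply_eq_iff_eq] at this
    rw [cycleGraph_adj]
    rcases this with rfl | rfl <;> simp
  · rw [cycleGraph_adj] at hij
    rcases hij with hij | hij
    · rw [sub_eq_iff_eq_add'] at hij
      exact hij ▸ (h j).symm
    · rw [sub_eq_iff_eq_add'] at hij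
      exact hij ▸ h i

lemma IsRegularOfDegree.iso_cycleGraph_five (hG : G.IsRegularOfDegree 2)
    (hV : Fintype.card V = 5) : Nonempty (G ≃g cycleGraph 5) := by
  obtain ⟨v₀⟩ : Nonempty V := Fintype.card_pos_iff.1 (by omega)
  obtain ⟨a, ha⟩ := (G.degree_pos_iff_exists_adj v₀).1 (by rw [hG.degree_eq]; omega)
  obtain ⟨b, hba, hb, hN₀⟩ := hG.exists_neighborFinset_eq_pair ha
  have hab := hG.not_adj_of_card_eq_five hV ha hb hba.symm
  obtain ⟨c, hcv₀, hac, -⟩ := hG.exists_neighborFinset_eq_pair ha.symm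
  obtain ⟨d, hdv₀, hbd, hNb⟩ := hG.exists_neighborFinset_eq_pair hb.symm
  have hbc : b ≠ c := by rintro rfl; exact hab hac
  have had : a ≠ d := by rintro rfl; exact hab hbd.symm
  have hcd : c ≠ d := by
    rintro rfl
    exact hcv₀ (hG.eq_of_card_eq_five hV ha hb hba.symm hac hbd)
  have hinj : Function.Injective ![v₀, a, c, d, b] := by
    intro i j hij
    fin_cases i <;> fin_cases j <;>
      simp_all [ha.ne, hb.ne, hac.ne, hbd.ne, hcv₀.symm, hdv₀.symm, hbc.symm, hba.symm]
  have hbij := (Fintype.bijective_iff_injective_and_card _).2 ⟨hinj, by simp [hV]⟩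
  have hcd' : G.Adj c d := by
    obtain ⟨w, hwa, hcw, -⟩ := hG.exists_neighborFinset_eq_pair hac.symm
    have hw : w ∈ Set.range ![v₀, a, c, d, b] := hbij.2.range_eq ▸ trivial
    simp only [Matrix.range_cons, Matrix.range_empty, Set.union_empty, Set.singleton_union,
      Set.mem_insert_iff, Set.mem_singleton_iff] at hw
    rcases hw with rfl | rfl | rfl | rfl | rfl
    · simpa [hN₀, hac.ne', hbc.symm] using (G.mem_neighborFinset _ _).2 hcw.symm
    · exact absurd rfl hwa
    · exact absurd hcw (G.irrefl)
    · exact hcw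
    · simpa [hNb, hcv₀, hcd] using (G.mem_neighborFinset _ _).2 hcw.symm
  refine iso_cycleGraph_of_adj_add_one (n := 2) hG (Equiv.ofBijective _ hbij) fun i => ?_
  fin_cases i
  · exact ha
  · exact hac
  · exact hcd'
  · exact hbd.symm
  · exact hb.symm

end cycle

/-- `2`-neighbour bootstrap percolation inside `S`: only vertices of `S` get activated. -/
noncomputable def stepIn (G : SimpleGraph V) (S A : Finset V) : Finset V :=
  A ∪ {v ∈ S | 2 ≤ G.degIn A v}

noncomputable def closureIn (G : SimpleGraph V) (S A : Finset V) : Finset V :=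
  (G.stepIn S)^[Fintype.card V] A

section closureIn

variable {S S' A A' : Finset V} {v x y : V}

lemma subset_stepIn (S A : Finset V) : A ⊆ G.stepIn S A := subset_union_left

lemma stepIn_subset (h : A ⊆ S) : G.stepIn S A ⊆ S := union_subset h (filter_subset _ _)

lemma stepIn_mono (hS : S ⊆ S') (hA : A ⊆ A') : G.stepIn S A ⊆ G.stepIn S' A' :=
  union_subset_union hA fun v hv => by
    rw [mem_filter] at hv ⊢
    exact ⟨hS hv.1, hv.2.trans (degIn_mono hA v)⟩

lemma subset_closureIn (S A : Finset V) : A ⊆ G.closureIn S A := by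
  unfold closureIn
  induction Fintype.card V with
  | zero => rfl
  | succ n ih => exact ih.trans (by rw [Function.iterate_succ_apply']; exact subset_stepIn _ _)

lemma closureIn_subset (h : A ⊆ S) : G.closureIn S A ⊆ S := by
  unfold closureIn
  induction Fintype.card V with
  | zero => exact h
  | succ n ih => rw [Function.iterate_succ_apply']; exact stepIn_subset ih

lemma closureIn_mono (hS : S ⊆ S') (hA : A ⊆ A') : G.closureIn S A ⊆ G.closureIn S' A' := by
  unfold closureIn
  induction Fintype.card V with
  | zero => exact hA
  | succ n ih => simp only [Function.iterate_succ_apply']; exact stepIn_mono hS ih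

lemma stepIn_closureIn (S A : Finset V) : G.stepIn S (G.closureIn S A) = G.closureIn S A :=
  Finset.iterate_card_fixed _ (subset_stepIn S) A

lemma mem_closureIn_of_two_le_degIn (hv : v ∈ S) (h : 2 ≤ G.degIn (G.closureIn S A) v) :
    v ∈ G.closureIn S A := by
  rw [← stepIn_closureIn]
  exact mem_union_right _ (mem_filter.2 ⟨hv, h⟩)

lemma degIn_closureIn_le_one (hv : v ∈ S) (hvA : v ∉ G.closureIn S A) :
    G.degIn (G.closureIn S A) v ≤ 1 := by
  by_contra h
  exact hvA (mem_closureIn_of_two_le_degIn hv (by omega))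

lemma mem_closureIn_of_adj (hv : v ∈ S) (hx : x ∈ G.closureIn S A) (hy : y ∈ G.closureIn S A)
    (hxy : x ≠ y) (hvx : G.Adj v x) (hvy : G.Adj v y) : v ∈ G.closureIn S A :=
  mem_closureIn_of_two_le_degIn hv (two_le_degIn hx hy hxy hvx hvy)

lemma subset_closureIn_of_adj {K : Finset V} (hK : K ⊆ S) (hx : x ∈ G.closureIn S A)
    (hy : y ∈ G.closureIn S A) (hxy : x ≠ y)
    (h : ∀ v ∈ K, v ≠ x → v ≠ y → G.Adj v x ∧ G.Adj v y) : K ⊆ G.closureIn S A := by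
  intro v hv
  by_cases hvx : v = x
  · exact hvx ▸ hx
  by_cases hvy : v = y
  · exact hvy ▸ hy
  exact mem_closureIn_of_adj (hK hv) hx hy hxy (h v hv hvx hvy).1 (h v hv hvx hvy).2

lemma subset_closureIn_of_isClique {K : Finset V} (hK : K ⊆ S) (hKc : G.IsClique (K : Set V))
    (hxK : x ∈ K) (hyK : y ∈ K) (hx : x ∈ G.closureIn S A) (hy : y ∈ G.closureIn S A)
    (hxy : x ≠ y) : K ⊆ G.closureIn S A :=
  subset_closureIn_of_adj hK hx hy hxy fun _ hv hvx hvy => ⟨hKc hv hxK hvx, hKc hv hyK hvy⟩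

lemma left_mem_closureIn_pair (S : Finset V) (x y : V) : x ∈ G.closureIn S {x, y} :=
  subset_closureIn S _ (mem_insert_self x _)

lemma right_mem_closureIn_pair (S : Finset V) (x y : V) : y ∈ G.closureIn S {x, y} :=
  subset_closureIn S _ (mem_insert_of_mem (mem_singleton_self y))

lemma closureIn_eq_of_subset_of_sdiff_subset {B : Finset V} (hA : A ⊆ S)
    (hB : B ⊆ G.closureIn S A) (hC : S \ B ⊆ G.closureIn S A) : G.closureIn S A = S :=
  (closureIn_subset hA).antisymm <| subset_union_right.trans <|
    union_sdiff_self_eq_union.symm.subset.trans (union_subset hB hC)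

lemma percolates_of_closureIn_univ (h : G.closureIn univ A = univ) : Percolates G 2 A :=
  ⟨Fintype.card V, h⟩

end closureIn

/-- The condition `d(x) + d(y) ≥ |S| - 1` on nonadjacent pairs of `G[S]`, written without
truncated subtraction. -/
def OreIn (G : SimpleGraph V) (S : Finset V) : Prop :=
  ∀ x ∈ S, ∀ y ∈ S, x ≠ y → ¬ G.Adj x y → #S ≤ G.degIn S x + G.degIn S y + 1

/-- `G[S]` is `2`-regular on five vertices, i.e. a `C₅`
(see `IsRegularOfDegree.iso_cycleGraph_five`). -/
def IsC5In (G : SimpleGraph V) (S : Finset V) : Prop :=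
  #S = 5 ∧ ∀ x ∈ S, G.degIn S x = 2

def HasSpanningPair (G : SimpleGraph V) (S : Finset V) : Prop :=
  ∃ A ⊆ S, #A = 2 ∧ G.closureIn S A = S

section OreIn

variable {S : Finset V} {v : V}

lemma OreIn.degIn_pos (hS : G.OreIn S) (h2 : 2 ≤ #S) (hv : v ∈ S) : 0 < G.degIn S v := by
  by_contra! h0
  obtain ⟨y, hy, hyv⟩ := exists_mem_ne (by omega : 1 < #S) v
  have hvy : ¬ G.Adj v y := fun h => by
    have := degIn_pos_of_adj hy h
    omega
  have := hS v hv y hy hyv.symm hvy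
  exact hvy (adj_of_card_le_degIn_add_one hy (by omega) hv hyv.symm).symm

/-- Two nonadjacent vertices have a common neighbour, since their neighbourhoods are too large
to be disjoint in `S \ {x, y}`. -/
lemma OreIn.exists_adj_adj (hS : G.OreIn S) (h3 : 3 ≤ #S) :
    ∃ w ∈ S, ∃ x ∈ S, ∃ y ∈ S, x ≠ y ∧ G.Adj w x ∧ G.Adj w y := by
  by_cases hna : ∃ x ∈ S, ∃ y ∈ S, x ≠ y ∧ ¬ G.Adj x y
  · obtain ⟨x, hx, y, hy, hxy, hnadj⟩ := hna
    have hsub : ∀ u ∈ ({x, y} : Finset V), G.neighborFinset u ∩ S ⊆ S \ {x, y} := by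
      intro u hu t ht
      rw [mem_inter, mem_neighborFinset] at ht
      refine mem_sdiff.2 ⟨ht.2, fun htxy => ?_⟩
      simp only [mem_insert, mem_singleton] at hu htxy
      rcases hu with rfl | rfl <;> rcases htxy with rfl | rfl
      all_goals first | exact G.irrefl ht.1 | exact hnadj ht.1 | exact hnadj ht.1.symm
    have hcard : #(S \ {x, y}) + 2 = #S := by
      rw [card_sdiff_of_subset (pair_subset hx hy), card_pair hxy]
      omega
    obtain ⟨w, hw⟩ := inter_nonempty_of_card_lt_card_add_card (hsub x (by simp))
      (hsub y (by simp)) (by have := hS x hx y hy hxy hnadj; unfold degIn at this; omega)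
    simp only [mem_inter, mem_neighborFinset] at hw
    exact ⟨w, hw.1.2, x, hx, y, hy, hxy, hw.1.1.symm, hw.2.1.symm⟩
  · push Not at hna
    obtain ⟨w, hw, x, hx, y, hy, hwx, hwy, hxy⟩ := two_lt_card.1 (by omega : 2 < #S)
    exact ⟨w, hw, x, hx, y, hy, hxy, hna w hw x hx hwx, hna w hw y hy hwy⟩

end OreIn

/-- Models the closure `B` of a pair whose closure is as large as possible. -/
structure IsMaxSpan (G : SimpleGraph V) (S B : Finset V) : Prop where
  subset : B ⊆ S
  three_le_card : 3 ≤ #B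
  degIn_le_one : ∀ c ∈ S \ B, G.degIn B c ≤ 1
  card_closureIn_le : ∀ A ⊆ S, #A = 2 → #(G.closureIn S A) ≤ #B

lemma exists_isMaxSpan {S : Finset V} (hS : G.OreIn S) (h3 : 3 ≤ #S) :
    ∃ p ⊆ S, #p = 2 ∧ G.IsMaxSpan S (G.closureIn S p) := by
  obtain ⟨p, hp, hmax⟩ := exists_max_image (S.powersetCard 2) (fun A => #(G.closureIn S A))
    (powersetCard_nonempty.2 (by omega))
  obtain ⟨hpS, hp2⟩ := mem_powersetCard.1 hp
  obtain ⟨w, hw, x, hx, y, hy, hxy, hwx, hwy⟩ := hS.exists_adj_adj h3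
  have hxyS := pair_subset hx hy
  have hwxy : {w, x, y} ⊆ G.closureIn S {x, y} :=
    insert_subset (mem_closureIn_of_adj hw (left_mem_closureIn_pair S x y)
      (right_mem_closureIn_pair S x y) hxy hwx hwy) (subset_closureIn S _)
  refine ⟨p, hpS, hp2, closureIn_subset hpS, ?_, fun c hc => ?_, fun A hAS hA2 => ?_⟩
  · calc 3 = #{w, x, y} := (card_eq_three.2 ⟨w, x, y, hwx.ne, hwy.ne, hxy, rfl⟩).symm
      _ ≤ #(G.closureIn S {x, y}) := card_le_card hwxy
      _ ≤ #(G.closureIn S p) := hmax _ (mem_powersetCard.2 ⟨hxyS, card_pair hxy⟩)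
  · exact degIn_closureIn_le_one (mem_sdiff.1 hc).1 (mem_sdiff.1 hc).2
  · exact hmax A (mem_powersetCard.2 ⟨hAS, hA2⟩)

namespace IsMaxSpan

variable {S B A : Finset V} {b b₀ c c₀ x y y₁ y₂ z : V}

lemma card_add_card_sdiff (hB : G.IsMaxSpan S B) : #B + #(S \ B) = #S := by
  rw [add_comm, card_sdiff_add_card_eq_card hB.subset]

lemma degIn_le_card_sdiff (hB : G.IsMaxSpan S B) (hc : c ∈ S \ B) :
    G.degIn S c ≤ #(S \ B) := by
  have := hB.degIn_le_one c hc
  have := degIn_lt_card (G := G) hc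
  rw [degIn_eq_add_degIn_sdiff hB.subset]
  omega

lemma card_le_degIn_add_one (hS : G.OreIn S) (hB : G.IsMaxSpan S B) (hb : b ∈ B)
    (hc : c ∈ S \ B) (h : ¬ G.Adj b c) : #B ≤ G.degIn S b + 1 := by
  have hbc : b ≠ c := fun hbc => (mem_sdiff.1 hc).2 (hbc ▸ hb)
  have := hS b (hB.subset hb) c (mem_sdiff.1 hc).1 hbc h
  have := hB.degIn_le_card_sdiff hc
  have := hB.card_add_card_sdiff
  omega

lemma adj_of_degIn_sdiff_eq_zero (hS : G.OreIn S) (hB : G.IsMaxSpan S B)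
    (hC : (S \ B).Nonempty) (hb : b ∈ B) (h0 : G.degIn (S \ B) b = 0) :
    ∀ z ∈ B, z ≠ b → G.Adj b z := by
  obtain ⟨c, hc⟩ := hC
  have hbc : ¬ G.Adj b c := fun h => by
    have := degIn_pos_of_adj hc h
    omega
  have := hB.card_le_degIn_add_one hS hb hc hbc
  rw [degIn_eq_add_degIn_sdiff hB.subset, h0] at this
  exact fun z => adj_of_card_le_degIn_add_one hb this

lemma sum_degIn_sdiff_le (hB : G.IsMaxSpan S B) :
    ∑ b ∈ B, G.degIn (S \ B) b ≤ #(S \ B) := by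
  rw [sum_degIn_comm]
  simpa using sum_le_card_nsmul _ _ 1 hB.degIn_le_one

/-- Inside `S \ B` the degree condition holds with room to spare, because `#B ≥ 3` and every
vertex of `S \ B` loses at most one neighbour to `B`. -/
lemma card_sdiff_le_degIn_add_degIn (hS : G.OreIn S) (hB : G.IsMaxSpan S B) (hx : x ∈ S \ B)
    (hy : y ∈ S \ B) (hxy : x ≠ y) (h : ¬ G.Adj x y) :
    #(S \ B) ≤ G.degIn (S \ B) x + G.degIn (S \ B) y := by
  have := hS x (mem_sdiff.1 hx).1 y (mem_sdiff.1 hy).1 hxy h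
  have := hB.degIn_le_one x hx
  have := hB.degIn_le_one y hy
  have := hB.card_add_card_sdiff
  have := hB.three_le_card
  rw [degIn_eq_add_degIn_sdiff hB.subset, degIn_eq_add_degIn_sdiff hB.subset] at *
  omega

lemma oreIn_sdiff (hS : G.OreIn S) (hB : G.IsMaxSpan S B) : G.OreIn (S \ B) :=
  fun x hx y hy hxy h => (hB.card_sdiff_le_degIn_add_degIn hS hx hy hxy h).trans (by omega)

lemma not_isC5In_sdiff (hS : G.OreIn S) (hB : G.IsMaxSpan S B) : ¬ G.IsC5In (S \ B) := by
  rintro ⟨h5, hreg⟩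
  obtain ⟨x, hx⟩ : (S \ B).Nonempty := card_pos.1 (by omega)
  obtain ⟨y, hy, hxy⟩ := exists_not_adj_of_degIn_lt (G := G) (S := (S \ B).erase x) (v := x) (by
    rw [card_erase_of_mem hx, h5]
    have := degIn_mono (G := G) (erase_subset x (S \ B)) x
    have := hreg x hx
    omega)
  have := hB.card_sdiff_le_degIn_add_degIn hS hx (mem_of_mem_erase hy) (ne_of_mem_erase hy).symm hxy
  rw [hreg x hx, hreg y (mem_of_mem_erase hy)] at this
  omega

lemma hasSpanningPair_of_card_sdiff_eq_one (hS : G.OreIn S) (hB : G.IsMaxSpan S B)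
    (h1 : #(S \ B) = 1) : G.HasSpanningPair S := by
  obtain ⟨c, hC⟩ := card_eq_one.1 h1
  have hc : c ∈ S \ B := hC ▸ mem_singleton_self c
  have hcS := (mem_sdiff.1 hc).1
  have hcC : G.degIn (S \ B) c = 0 :=
    degIn_eq_zero_of_forall_not_adj (by simp [hC])
  obtain ⟨b₀, hb₀, hcb₀⟩ := exists_adj_of_degIn_pos (S := B) (v := c) (by
    have := hB.card_add_card_sdiff
    have := hS.degIn_pos (by have := hB.three_le_card; omega) hcS
    rwa [degIn_eq_add_degIn_sdiff hB.subset, hcC, add_zero] at this)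
  have hfull : ∀ b ∈ B, b ≠ b₀ → ∀ z ∈ B, z ≠ b → G.Adj b z := by
    intro b hb hbb₀
    refine hB.adj_of_degIn_sdiff_eq_zero hS ⟨c, hc⟩ hb (degIn_eq_zero_of_forall_not_adj ?_)
    simp only [hC, mem_singleton, forall_eq]
    exact fun hbc => hbb₀ (eq_of_adj_of_degIn_le_one (hB.degIn_le_one c hc) hb hb₀ hbc.symm hcb₀)
  have hclique : G.IsClique (B : Set V) := by
    intro x hx y hy hxy
    by_cases hx₀ : x = b₀
    · exact (hfull y hy (hx₀ ▸ Ne.symm hxy) x hx hxy).symm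
    · exact hfull x hx hx₀ y hy (Ne.symm hxy)
  obtain ⟨x, hx, hxb₀⟩ := exists_mem_ne (by have := hB.three_le_card; omega : 1 < #B) b₀
  have hcx : c ≠ x := (ne_of_mem_of_not_mem hx (mem_sdiff.1 hc).2).symm
  have hpair := pair_subset hcS (hB.subset hx)
  refine ⟨{c, x}, hpair, card_pair hcx, ?_⟩
  have hb₀cl : b₀ ∈ G.closureIn S {c, x} :=
    mem_closureIn_of_adj (hB.subset hb₀) (left_mem_closureIn_pair S c x)
      (right_mem_closureIn_pair S c x) hcx hcb₀.symm (hclique hb₀ hx (Ne.symm hxb₀))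
  refine closureIn_eq_of_subset_of_sdiff_subset hpair (subset_closureIn_of_isClique hB.subset
    hclique hx hb₀ (right_mem_closureIn_pair S c x) hb₀cl hxb₀) ?_
  rw [hC, singleton_subset_iff]
  exact left_mem_closureIn_pair S c x

section lowDegree

lemma degIn_sdiff_pos_of_degIn_lt (hS : G.OreIn S) (hB : G.IsMaxSpan S B) (hc₀ : c₀ ∈ S \ B)
    (hlow : G.degIn S c₀ < #(S \ B)) (hb : b ∈ B) : 0 < G.degIn (S \ B) b := by
  by_cases hbc₀ : G.Adj b c₀
  · exact degIn_pos_of_adj hc₀ hbc₀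
  have hbc : b ≠ c₀ := fun h => (mem_sdiff.1 hc₀).2 (h ▸ hb)
  have := hS b (hB.subset hb) c₀ (mem_sdiff.1 hc₀).1 hbc hbc₀
  have := degIn_lt_card (G := G) hb
  have := hB.card_add_card_sdiff
  rw [degIn_eq_add_degIn_sdiff hB.subset b] at *
  omega

/-- The spanning pair of `S \ B` spans exactly `S \ B` inside `S` as well; by maximality of `B`
and double counting, `B` and `S \ B` are then joined by a perfect matching. -/
lemma degIn_eq_one_of_degIn_lt (hS : G.OreIn S) (hB : G.IsMaxSpan S B) (hc₀ : c₀ ∈ S \ B)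
    (hlow : G.degIn S c₀ < #(S \ B)) (hspan : G.HasSpanningPair (S \ B)) :
    #B = #(S \ B) ∧ (∀ b ∈ B, G.degIn (S \ B) b = 1) ∧ ∀ c ∈ S \ B, G.degIn B c = 1 := by
  obtain ⟨q, hqC, hq2, hqcl⟩ := hspan
  have hCD : S \ B ⊆ G.closureIn S q := hqcl ▸ closureIn_mono sdiff_subset Subset.rfl
  have hpos := fun b hb => degIn_sdiff_pos_of_degIn_lt hS hB hc₀ hlow (b := b) hb
  have hBsum : #B ≤ ∑ b ∈ B, G.degIn (S \ B) b := by
    simpa using sum_le_sum fun b hb => Nat.one_le_iff_ne_zero.2 (hpos b hb).ne'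
  have hDB := hB.card_closureIn_le q (hqC.trans sdiff_subset) hq2
  have hsum := hB.sum_degIn_sdiff_le
  have hBC : #B = #(S \ B) := le_antisymm (by omega) ((card_le_card hCD).trans hDB)
  have hD : G.closureIn S q = S \ B := (eq_of_subset_of_card_le hCD (by omega)).symm
  have hBone : ∀ b ∈ B, G.degIn (S \ B) b = 1 := fun b hb => by
    have := hpos b hb
    have := hD ▸ degIn_closureIn_le_one (G := G) (A := q) (hB.subset hb)
      (by rw [hD]; exact fun h => (mem_sdiff.1 h).2 hb)
    omega
  refine ⟨hBC, hBone, (sum_eq_sum_iff_of_le hB.degIn_le_one).1 ?_⟩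
  rw [← sum_degIn_comm, sum_congr rfl hBone]
  simp [hBC]

lemma isClique_of_degIn_lt (hS : G.OreIn S) (hB : G.IsMaxSpan S B) (hc₀ : c₀ ∈ S \ B)
    (hlow : G.degIn S c₀ < #(S \ B)) (hBone : ∀ b ∈ B, G.degIn (S \ B) b = 1) :
    G.IsClique (B : Set V) := by
  have hfull : ∀ b ∈ B, ¬ G.Adj b c₀ → ∀ z ∈ B, z ≠ b → G.Adj b z := by
    intro b hb hbc₀
    have hbc : b ≠ c₀ := fun h => (mem_sdiff.1 hc₀).2 (h ▸ hb)
    have := hS b (hB.subset hb) c₀ (mem_sdiff.1 hc₀).1 hbc hbc₀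
    have := hB.card_add_card_sdiff
    have := hBone b hb
    rw [degIn_eq_add_degIn_sdiff hB.subset b] at *
    exact fun z => adj_of_card_le_degIn_add_one hb (by omega)
  intro x hx y hy hxy
  by_cases hxc₀ : G.Adj x c₀
  · have hyc₀ : ¬ G.Adj y c₀ := fun hyc₀ => hxy
      (eq_of_adj_of_degIn_le_one (hB.degIn_le_one c₀ hc₀) hx hy hxc₀.symm hyc₀.symm)
    exact (hfull y hy hyc₀ x hx hxy).symm
  · exact hfull x hx hxc₀ y hy (Ne.symm hxy)

lemma card_sdiff_le_degIn_sdiff_add_two (hS : G.OreIn S) (hB : G.IsMaxSpan S B)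
    (hBone : ∀ b ∈ B, G.degIn (S \ B) b = 1) (hCone : ∀ c ∈ S \ B, G.degIn B c = 1)
    (hc : c ∈ S \ B) : #(S \ B) ≤ G.degIn (S \ B) c + 2 := by
  obtain ⟨b, hb, hcb⟩ := exists_not_adj_of_degIn_lt (G := G) (S := B) (v := c) (by
    rw [hCone c hc]; have := hB.three_le_card; omega)
  have := hS b (hB.subset hb) c (mem_sdiff.1 hc).1 (ne_of_mem_of_not_mem hb (mem_sdiff.1 hc).2)
    fun h => hcb h.symm
  have := degIn_lt_card (G := G) hb
  have := hBone b hb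
  have := hCone c hc
  have := hB.card_add_card_sdiff
  rw [degIn_eq_add_degIn_sdiff hB.subset b, degIn_eq_add_degIn_sdiff hB.subset c] at *
  omega

lemma hasSpanningPair_of_degIn_lt (hS : G.OreIn S) (hB : G.IsMaxSpan S B) (hc₀ : c₀ ∈ S \ B)
    (hlow : G.degIn S c₀ < #(S \ B)) (hspan : G.HasSpanningPair (S \ B)) :
    G.HasSpanningPair S := by
  obtain ⟨hBC, hBone, hCone⟩ := hB.degIn_eq_one_of_degIn_lt hS hc₀ hlow hspan
  have hclique := hB.isClique_of_degIn_lt hS hc₀ hlow hBone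
  have hdense : ∀ c ∈ S \ B, #(S \ B) ≤ G.degIn (S \ B) c + 2 := fun _ hc =>
    hB.card_sdiff_le_degIn_sdiff_add_two hS hBone hCone hc
  have hB3 := hB.three_le_card
  have hpartner : ∀ c ∈ S \ B, ∃ b ∈ B, G.Adj c b := fun c hc =>
    exists_adj_of_degIn_pos (by rw [hCone c hc]; exact one_pos)
  obtain ⟨b₁, hb₁, hc₀b₁⟩ := hpartner c₀ hc₀
  obtain ⟨x, hx, hxb₁⟩ := exists_mem_ne (by omega : 1 < #B) b₁
  have hc₀x : c₀ ≠ x := (ne_of_mem_of_not_mem hx (mem_sdiff.1 hc₀).2).symm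
  have hpair := pair_subset (mem_sdiff.1 hc₀).1 (hB.subset hx)
  refine ⟨{c₀, x}, hpair, card_pair hc₀x, ?_⟩
  have hc₀D := left_mem_closureIn_pair (G := G) S c₀ x
  have hxD := right_mem_closureIn_pair (G := G) S c₀ x
  have hBD : B ⊆ G.closureIn S {c₀, x} :=
    subset_closureIn_of_isClique hB.subset hclique hx hb₁ hxD (mem_closureIn_of_adj
      (hB.subset hb₁) hc₀D hxD hc₀x hc₀b₁.symm (hclique hb₁ hx (Ne.symm hxb₁))) hxb₁
  have hCD : ∀ c ∈ S \ B, ∀ y ∈ S \ B, y ∈ G.closureIn S {c₀, x} → G.Adj c y →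
      c ∈ G.closureIn S {c₀, x} := fun c hc y hy hyD hcy => by
    obtain ⟨b, hb, hcb⟩ := hpartner c hc
    exact mem_closureIn_of_adj (mem_sdiff.1 hc).1 (hBD hb) hyD
      (ne_of_mem_of_not_mem hb (mem_sdiff.1 hy).2) hcb hcy
  obtain ⟨c₁, hc₁, hc₀c₁⟩ := exists_adj_of_degIn_pos (G := G) (S := S \ B) (v := c₀) (by
    have := hdense c₀ hc₀; omega)
  have hc₁D := hCD c₁ hc₁ c₀ hc₀ hc₀D hc₀c₁.symm
  refine closureIn_eq_of_subset_of_sdiff_subset hpair hBD fun c hc => ?_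
  by_cases hcc₀ : c = c₀
  · exact hcc₀ ▸ hc₀D
  by_cases hcc₁ : c = c₁
  · exact hcc₁ ▸ hc₁D
  rcases adj_or_adj_of_card_le_degIn_add_two hc (hdense c hc) hc₀ hc₁ hc₀c₁.ne
    (Ne.symm hcc₀) (Ne.symm hcc₁) with h | h
  · exact hCD c hc c₀ hc₀ hc₀D h
  · exact hCD c hc c₁ hc₁ hc₁D h

end lowDegree

section highDegree

lemma degIn_eq_one_of_le_degIn (hB : G.IsMaxSpan S B)
    (hhigh : ∀ c ∈ S \ B, #(S \ B) ≤ G.degIn S c) (hc : c ∈ S \ B) :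
    G.degIn B c = 1 ∧ G.degIn (S \ B) c + 1 = #(S \ B) := by
  have := hhigh c hc
  have := hB.degIn_le_one c hc
  have := degIn_lt_card (G := G) hc
  rw [degIn_eq_add_degIn_sdiff hB.subset] at *
  omega

lemma isClique_sdiff_of_le_degIn (hB : G.IsMaxSpan S B)
    (hhigh : ∀ c ∈ S \ B, #(S \ B) ≤ G.degIn S c) : G.IsClique ((S \ B : Finset V) : Set V) :=
  fun _ hx _ hy hxy => adj_of_card_le_degIn_add_one hx
    (hB.degIn_eq_one_of_le_degIn hhigh hx).2.ge hy (Ne.symm hxy)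

lemma exists_adj_of_le_degIn (hB : G.IsMaxSpan S B)
    (hhigh : ∀ c ∈ S \ B, #(S \ B) ≤ G.degIn S c) (hc : c ∈ S \ B) : ∃ b ∈ B, G.Adj c b :=
  exists_adj_of_degIn_pos (by rw [(hB.degIn_eq_one_of_le_degIn hhigh hc).1]; exact one_pos)

lemma sum_degIn_sdiff_eq_of_le_degIn (hB : G.IsMaxSpan S B)
    (hhigh : ∀ c ∈ S \ B, #(S \ B) ≤ G.degIn S c) :
    ∑ b ∈ B, G.degIn (S \ B) b = #(S \ B) := by
  rw [sum_degIn_comm, sum_congr rfl fun c hc => (hB.degIn_eq_one_of_le_degIn hhigh hc).1]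
  simp

lemma closureIn_eq_of_le_degIn (hB : G.IsMaxSpan S B)
    (hhigh : ∀ c ∈ S \ B, #(S \ B) ≤ G.degIn S c) (hA : A ⊆ S) (hc : c ∈ S \ B)
    (hcA : c ∈ G.closureIn S A) (hBA : B ⊆ G.closureIn S A) : G.closureIn S A = S := by
  refine closureIn_eq_of_subset_of_sdiff_subset hA hBA fun c' hc' => ?_
  by_cases hcc' : c' = c
  · exact hcc' ▸ hcA
  obtain ⟨b, hb, hc'b⟩ := hB.exists_adj_of_le_degIn hhigh hc'
  exact mem_closureIn_of_adj (mem_sdiff.1 hc').1 (hBA hb) hcA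
    (ne_of_mem_of_not_mem hb (mem_sdiff.1 hc).2) hc'b
    (hB.isClique_sdiff_of_le_degIn hhigh hc' hc hcc')

/-- A pair `{b, c'}` with `b` the neighbour of `c` in `B` spans `S \ B` and `b`. -/
lemma card_sdiff_lt_card_of_le_degIn (hB : G.IsMaxSpan S B)
    (hhigh : ∀ c ∈ S \ B, #(S \ B) ≤ G.degIn S c) (h2 : 2 ≤ #(S \ B)) : #(S \ B) < #B := by
  obtain ⟨c, hc, c', hc', hcc'⟩ := one_lt_card.1 (by omega : 1 < #(S \ B))
  obtain ⟨b, hb, hcb⟩ := hB.exists_adj_of_le_degIn hhigh hc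
  have hbc' : b ≠ c' := ne_of_mem_of_not_mem hb (mem_sdiff.1 hc').2
  have hclique := hB.isClique_sdiff_of_le_degIn hhigh
  have hcD : c ∈ G.closureIn S {b, c'} :=
    mem_closureIn_of_adj (mem_sdiff.1 hc).1 (left_mem_closureIn_pair S b c')
      (right_mem_closureIn_pair S b c') hbc' hcb (hclique hc hc' hcc')
  have hCD : insert b (S \ B) ⊆ G.closureIn S {b, c'} :=
    insert_subset (left_mem_closureIn_pair S b c') (subset_closureIn_of_isClique sdiff_subset
      hclique hc hc' hcD (right_mem_closureIn_pair S b c') hcc')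
  have := (card_le_card hCD).trans
    (hB.card_closureIn_le _ (pair_subset (hB.subset hb) (mem_sdiff.1 hc').1) (card_pair hbc'))
  rwa [card_insert_of_notMem (fun h => (mem_sdiff.1 h).2 hb), Nat.add_one_le_iff] at this

lemma hasSpanningPair_of_degIn_sdiff_eq_zero (hS : G.OreIn S) (hB : G.IsMaxSpan S B)
    (hhigh : ∀ c ∈ S \ B, #(S \ B) ≤ G.degIn S c) (hc : c ∈ S \ B) (hb₀ : b₀ ∈ B) (hz : z ∈ B)
    (hzb₀ : z ≠ b₀) (h₀ : G.degIn (S \ B) b₀ = 0) (hz₀ : G.degIn (S \ B) z = 0) :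
    G.HasSpanningPair S := by
  have hb₀full := hB.adj_of_degIn_sdiff_eq_zero hS ⟨c, hc⟩ hb₀ h₀
  have hzfull := hB.adj_of_degIn_sdiff_eq_zero hS ⟨c, hc⟩ hz hz₀
  obtain ⟨y, hy, hcy⟩ := hB.exists_adj_of_le_degIn hhigh hc
  have hy₀ : 0 < G.degIn (S \ B) y := degIn_pos_of_adj hc hcy.symm
  have hyb₀ : y ≠ b₀ := by rintro rfl; omega
  have hyz : y ≠ z := by rintro rfl; omega
  have hcb₀ : c ≠ b₀ := (ne_of_mem_of_not_mem hb₀ (mem_sdiff.1 hc).2).symm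
  have hpair := pair_subset (mem_sdiff.1 hc).1 (hB.subset hb₀)
  refine ⟨{c, b₀}, hpair, card_pair hcb₀, hB.closureIn_eq_of_le_degIn hhigh hpair hc
    (left_mem_closureIn_pair S c b₀) ?_⟩
  have hb₀D := right_mem_closureIn_pair (G := G) S c b₀
  have hyD := mem_closureIn_of_adj (hB.subset hy) (left_mem_closureIn_pair S c b₀) hb₀D hcb₀
    hcy.symm (hb₀full y hy hyb₀).symm
  have hzD := mem_closureIn_of_adj (hB.subset hz) hb₀D hyD hyb₀.symm
    (hb₀full z hz hzb₀).symm (hzfull y hy hyz)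
  exact subset_closureIn_of_adj hB.subset hb₀D hzD hzb₀.symm fun v hv hvb₀ hvz =>
    ⟨(hb₀full v hv hvb₀).symm, (hzfull v hv hvz).symm⟩

lemma degIn_sdiff_eq_one_of_pos (hB : G.IsMaxSpan S B)
    (hhigh : ∀ c ∈ S \ B, #(S \ B) ≤ G.degIn S c) (h2 : 2 ≤ #(S \ B)) (hb₀ : b₀ ∈ B)
    (h₀ : G.degIn (S \ B) b₀ = 0) (hpos : ∀ y ∈ B.erase b₀, 0 < G.degIn (S \ B) y) :
    #B = #(S \ B) + 1 ∧ ∀ y ∈ B.erase b₀, G.degIn (S \ B) y = 1 := by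
  have hsum := hB.sum_degIn_sdiff_eq_of_le_degIn hhigh
  rw [← sum_erase B h₀] at hsum
  have hle : ∑ _y ∈ B.erase b₀, 1 ≤ ∑ y ∈ B.erase b₀, G.degIn (S \ B) y := sum_le_sum hpos
  have hlt := hB.card_sdiff_lt_card_of_le_degIn hhigh h2
  have herase := card_erase_of_mem hb₀
  rw [sum_const, smul_eq_mul, mul_one] at hle
  refine ⟨by omega, fun y hy => ((sum_eq_sum_iff_of_le (f := fun _ => 1) hpos).1 ?_ y hy).symm⟩
  rw [sum_const, smul_eq_mul, mul_one]
  omega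

lemma card_le_degIn_add_two (hS : G.OreIn S) (hB : G.IsMaxSpan S B) (h2 : 2 ≤ #(S \ B))
    (hy : y ∈ B) (hy₁ : G.degIn (S \ B) y = 1) : #B ≤ G.degIn B y + 2 := by
  obtain ⟨c, hc, hyc⟩ := exists_not_adj_of_degIn_lt (G := G) (S := S \ B) (v := y) (by omega)
  have := hB.card_le_degIn_add_one hS hy hc hyc
  rw [degIn_eq_add_degIn_sdiff hB.subset, hy₁] at this
  omega

lemma hasSpanningPair_of_adj (hS : G.OreIn S) (hB : G.IsMaxSpan S B)
    (hhigh : ∀ c ∈ S \ B, #(S \ B) ≤ G.degIn S c) (h2 : 2 ≤ #(S \ B)) (hc : c ∈ S \ B)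
    (hb₀ : b₀ ∈ B) (h₀ : G.degIn (S \ B) b₀ = 0)
    (hone : ∀ y ∈ B.erase b₀, G.degIn (S \ B) y = 1) (hy₁ : y₁ ∈ B) (hcy₁ : G.Adj c y₁)
    (hy₂ : y₂ ∈ B.erase b₀) (hy₂y₁ : y₂ ≠ y₁) (hy₁y₂ : G.Adj y₁ y₂) : G.HasSpanningPair S := by
  have hb₀full := hB.adj_of_degIn_sdiff_eq_zero hS ⟨c, hc⟩ hb₀ h₀
  have hy₁b₀ : y₁ ≠ b₀ := by
    rintro rfl
    have := degIn_pos_of_adj hc hcy₁.symm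
    omega
  obtain ⟨hy₂b₀, hy₂B⟩ := mem_erase.1 hy₂
  have hcb₀ : c ≠ b₀ := (ne_of_mem_of_not_mem hb₀ (mem_sdiff.1 hc).2).symm
  have hpair := pair_subset (mem_sdiff.1 hc).1 (hB.subset hb₀)
  refine ⟨{c, b₀}, hpair, card_pair hcb₀, hB.closureIn_eq_of_le_degIn hhigh hpair hc
    (left_mem_closureIn_pair S c b₀) ?_⟩
  have hb₀D := right_mem_closureIn_pair (G := G) S c b₀
  have hy₁D := mem_closureIn_of_adj (hB.subset hy₁) (left_mem_closureIn_pair S c b₀) hb₀D hcb₀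
    hcy₁.symm (hb₀full y₁ hy₁ hy₁b₀).symm
  have hy₂D := mem_closureIn_of_adj (hB.subset hy₂B) hb₀D hy₁D hy₁b₀.symm
    (hb₀full y₂ hy₂B hy₂b₀).symm hy₁y₂.symm
  intro v hv
  by_cases hvb₀ : v = b₀
  · exact hvb₀ ▸ hb₀D
  by_cases hvy₁ : v = y₁
  · exact hvy₁ ▸ hy₁D
  by_cases hvy₂ : v = y₂
  · exact hvy₂ ▸ hy₂D
  rcases adj_or_adj_of_card_le_degIn_add_two hv
    (hB.card_le_degIn_add_two hS h2 hv (hone v (mem_erase.2 ⟨hvb₀, hv⟩))) hy₁ hy₂B hy₂y₁.symm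
    (Ne.symm hvy₁) (Ne.symm hvy₂) with h | h
  · exact mem_closureIn_of_adj (hB.subset hv) hb₀D hy₁D hy₁b₀.symm (hb₀full v hv hvb₀).symm h
  · exact mem_closureIn_of_adj (hB.subset hv) hb₀D hy₂D hy₂b₀.symm (hb₀full v hv hvb₀).symm h

lemma isC5In_of_forall_not_adj (hS : G.OreIn S) (hB : G.IsMaxSpan S B)
    (hhigh : ∀ c ∈ S \ B, #(S \ B) ≤ G.degIn S c) (h2 : 2 ≤ #(S \ B)) (hb₀ : b₀ ∈ B)
    (h₀ : G.degIn (S \ B) b₀ = 0) (hBcard : #B = #(S \ B) + 1)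
    (hone : ∀ y ∈ B.erase b₀, G.degIn (S \ B) y = 1) (hy₁ : y₁ ∈ B.erase b₀)
    (hn : ∀ y ∈ B.erase b₀, y ≠ y₁ → ¬ G.Adj y₁ y) : G.IsC5In S := by
  have hY := card_erase_of_mem hb₀
  have hy₁B := mem_of_mem_erase hy₁
  have h3 : #B = 3 := by
    have := degIn_add_card_lt hy₁B ((erase_subset _ _).trans (erase_subset _ _))
      (notMem_erase y₁ _) fun t ht => hn t (mem_of_mem_erase ht) (ne_of_mem_erase ht)
    have := hB.card_le_degIn_add_two hS h2 hy₁B (hone y₁ hy₁)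
    rw [card_erase_of_mem hy₁, hY] at *
    omega
  have hlow : ∀ v ∈ B, 2 ≤ G.degIn S v := fun v hv => by
    obtain ⟨c, hc, hvc⟩ := exists_not_adj_of_degIn_lt (G := G) (S := S \ B) (v := v) (by
      by_cases hvb₀ : v = b₀
      · rw [hvb₀, h₀]; omega
      · rw [hone v (mem_erase.2 ⟨hvb₀, hv⟩)]; omega)
    have := hB.card_le_degIn_add_one hS hv hc hvc
    omega
  refine ⟨by have := hB.card_add_card_sdiff; omega, fun v hv => ?_⟩
  by_cases hvB : v ∈ B
  · refine le_antisymm ?_ (hlow v hvB)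
    rw [degIn_eq_add_degIn_sdiff hB.subset]
    by_cases hvb₀ : v = b₀
    · have := degIn_lt_card (G := G) hvB
      rw [hvb₀, h₀] at *
      omega
    have hv' : v ∈ B.erase b₀ := mem_erase.2 ⟨hvb₀, hvB⟩
    obtain ⟨w, hw, hwv, hvw⟩ : ∃ w ∈ B, w ≠ v ∧ ¬ G.Adj v w := by
      by_cases hvy₁ : v = y₁
      · obtain ⟨w, hw, hwv⟩ := exists_mem_ne (by omega : 1 < #(B.erase b₀)) v
        exact ⟨w, mem_of_mem_erase hw, hwv, hvy₁ ▸ hn w hw (hvy₁ ▸ hwv)⟩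
      · exact ⟨y₁, hy₁B, Ne.symm hvy₁, fun h => hn v hv' hvy₁ h.symm⟩
    have := degIn_add_card_lt hvB (singleton_subset_iff.2 hw) (by simpa using hwv.symm)
      (by simpa using hvw)
    rw [card_singleton, hone v hv'] at *
    omega
  · have := hB.degIn_eq_one_of_le_degIn hhigh (mem_sdiff.2 ⟨hv, hvB⟩)
    rw [degIn_eq_add_degIn_sdiff hB.subset]
    omega

lemma hasSpanningPair_of_le_degIn (hS : G.OreIn S) (hB : G.IsMaxSpan S B)
    (hhigh : ∀ c ∈ S \ B, #(S \ B) ≤ G.degIn S c) (h2 : 2 ≤ #(S \ B)) (hS5 : ¬ G.IsC5In S) :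
    G.HasSpanningPair S := by
  have hlt := hB.card_sdiff_lt_card_of_le_degIn hhigh h2
  obtain ⟨b₀, hb₀, h₀⟩ : ∃ b₀ ∈ B, G.degIn (S \ B) b₀ < 1 := exists_lt_of_sum_lt (by
    rw [hB.sum_degIn_sdiff_eq_of_le_degIn hhigh, sum_const, smul_eq_mul, mul_one]
    exact hlt)
  replace h₀ : G.degIn (S \ B) b₀ = 0 := by omega
  obtain ⟨c, hc⟩ : (S \ B).Nonempty := card_pos.1 (by omega)
  by_cases hZ : ∃ z ∈ B, z ≠ b₀ ∧ G.degIn (S \ B) z = 0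
  · obtain ⟨z, hz, hzb₀, hz₀⟩ := hZ
    exact hB.hasSpanningPair_of_degIn_sdiff_eq_zero hS hhigh hc hb₀ hz hzb₀ h₀ hz₀
  push Not at hZ
  obtain ⟨hBcard, hone⟩ := hB.degIn_sdiff_eq_one_of_pos hhigh h2 hb₀ h₀ fun y hy =>
    Nat.pos_of_ne_zero (hZ y (mem_of_mem_erase hy) (ne_of_mem_erase hy))
  obtain ⟨y₁, hy₁, hcy₁⟩ := hB.exists_adj_of_le_degIn hhigh hc
  have hy₁b₀ : y₁ ≠ b₀ := by
    rintro rfl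
    have := degIn_pos_of_adj hc hcy₁.symm
    omega
  by_cases hadj : ∃ y₂ ∈ B.erase b₀, y₂ ≠ y₁ ∧ G.Adj y₁ y₂
  · obtain ⟨y₂, hy₂, hy₂y₁, hy₁y₂⟩ := hadj
    exact hB.hasSpanningPair_of_adj hS hhigh h2 hc hb₀ h₀ hone hy₁ hcy₁ hy₂ hy₂y₁ hy₁y₂
  push Not at hadj
  exact absurd (hB.isC5In_of_forall_not_adj hS hhigh h2 hb₀ h₀ hBcard hone (mem_erase.2 ⟨hy₁b₀, hy₁⟩) hadj) hS5

end highDegree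

end IsMaxSpan

theorem OreIn.hasSpanningPair {S : Finset V} (hS : G.OreIn S) (h2 : 2 ≤ #S)
    (hS5 : ¬ G.IsC5In S) : G.HasSpanningPair S := by
  induction S using Finset.strongInduction with
  | H S ih =>
  rcases h2.eq_or_lt with h2 | h3
  · exact ⟨S, Subset.rfl, h2.symm, (closureIn_subset Subset.rfl).antisymm (subset_closureIn S S)⟩
  obtain ⟨p, hpS, hp2, hB⟩ := exists_isMaxSpan hS h3
  set B := G.closureIn S p
  have hB3 := hB.three_le_card
  by_cases hC0 : #(S \ B) = 0
  · refine ⟨p, hpS, hp2, hB.subset.antisymm ?_⟩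
    rwa [card_eq_zero, sdiff_eq_empty_iff_subset] at hC0
  by_cases hC1 : #(S \ B) = 1
  · exact hB.hasSpanningPair_of_card_sdiff_eq_one hS hC1
  by_cases hlow : ∃ c₀ ∈ S \ B, G.degIn S c₀ < #(S \ B)
  · obtain ⟨c₀, hc₀, hlow⟩ := hlow
    exact hB.hasSpanningPair_of_degIn_lt hS hc₀ hlow <|
      ih _ (sdiff_ssubset hB.subset (card_pos.1 (by omega))) (hB.oreIn_sdiff hS) (by omega)
        (hB.not_isC5In_sdiff hS)
  push Not at hlow
  exact hB.hasSpanningPair_of_le_degIn hS hlow (by omega) hS5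

end SimpleGraph

open SimpleGraph

lemma two_le_card_of_percolates {V : Type*} [Fintype V] {G : SimpleGraph V} {A : Finset V}
    (hV : 2 ≤ Fintype.card V) (hA : Percolates G 2 A) : 2 ≤ #A := by
  by_contra! hA1
  obtain ⟨t, ht⟩ := hA
  have hfix : bootStep G 2 A = A := by
    refine union_eq_left.2 fun v hv => ?_
    have := (mem_filter.1 hv).2.trans (card_le_card (inter_subset_right (s₁ := G.neighborFinset v)))
    omega
  rw [Function.iterate_fixed hfix] at ht
  rw [ht, card_univ] at hA1
  omega

theorem stmt2 {V : Type*} [Fintype V] (G : SimpleGraph V)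
    (hn : 2 ≤ Fintype.card V)
    (hdeg : ∀ x y : V, x ≠ y → ¬ G.Adj x y →
      Fintype.card V - 1 ≤ G.degree x + G.degree y)
    (hC5 : ¬ Nonempty (G ≃g SimpleGraph.cycleGraph 5)) :
    minContagious G 2 = 2 := by
  have hS : G.OreIn univ := fun x _ y _ hxy h => by
    have := hdeg x y hxy h
    rw [card_univ, degIn_univ, degIn_univ]
    omega
  have hS5 : ¬ G.IsC5In univ := fun ⟨h5, hreg⟩ => hC5 <|
    IsRegularOfDegree.iso_cycleGraph_five (fun v => degIn_univ (G := G) v ▸ hreg v (mem_univ v))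
      (card_univ (α := V) ▸ h5)
  obtain ⟨A, -, hA2, hA⟩ := hS.hasSpanningPair (by rwa [card_univ]) hS5
  have hApc := percolates_of_closureIn_univ hA
  refine le_antisymm (Nat.sInf_le ⟨A, hA2, hApc⟩) (le_csInf ⟨2, A, hA2, hApc⟩ ?_)
  rintro k ⟨A', rfl, hA'⟩
  exact two_le_card_of_percolates hn hA'
end

section
/- Let G be a connected finite simple graph of order n ≥ 12 in which every pair of distinct nonadjacent vertices has degree sum at least n − 2, and suppose m(G,2) > 2. Let I be a set of maximum cardinality among all closures ⟨A⟩ of two-element sets A ⊆ V(G) under 2-neighbor bootstrap percolation, and let U = V(G) ∖ I. Then every vertex w ∈ I that has no neighbor in U is nonadjacent to at most one vertex of I ∖ {w}. -/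
open Finset
open scoped Classical

/-!
Let `u ∉ I` and let `S` be the set of non-neighbours of `w` in `I ∖ {w}`. Since `I` is closed,
`u` has at most one neighbour in `I`, so `d(u) ≤ n - |I|`; since all neighbours of `w` lie in `I`,
`d(w) = |I| - 1 - |S|`. As `u` and `w` are nonadjacent, `n - 2 ≤ d(u) + d(w) ≤ n - 1 - |S|`.
-/

theorem Finset.isFixedPt_iterate_card_of_subset_self {α : Type*} [Fintype α]
    {f : Finset α → Finset α} (hf : ∀ s, s ⊆ f s) (s : Finset α) :
    Function.IsFixedPt f (f^[Fintype.card α] s) := by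
  have hsucc (m : ℕ) : f^[m] s ⊆ f^[m + 1] s := by
    rw [Function.iterate_succ_apply']
    exact hf _
  have heq (m : ℕ) (h : #(f^[m] s) = #(f^[m + 1] s)) : f^[m + 1] s = f^[m] s :=
    (eq_of_subset_of_card_le (hsucc m) h.ge).symm
  have hstab : #(f^[Fintype.card α + 1] s) = #(f^[Fintype.card α] s) := by
    refine Nat.stabilises_of_monotone (f := fun m => #(f^[m] s))
      (monotone_nat_of_le_succ fun m => card_le_card (hsucc m)) (fun _ => card_le_univ _)
      (fun m h => ?_) (Nat.le_succ _)
    show _ = #(f^[m + 2] s)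
    rw [Function.iterate_succ_apply' f (m + 1), heq m h, ← Function.iterate_succ_apply' f m]
    exact h
  have := heq _ hstab.symm
  rwa [Function.iterate_succ_apply'] at this

section Bootstrap

variable {V : Type*} [Fintype V] (G : SimpleGraph V) {r : ℕ}

theorem isFixedPt_bootStep_bootClosure (r : ℕ) (A : Finset V) :
    Function.IsFixedPt (bootStep G r) (bootClosure G r A) :=
  isFixedPt_iterate_card_of_subset_self (fun _ => subset_union_left) A

theorem bootClosure_ne_univ_of_card_lt_minContagious {A : Finset V}
    (hA : #A < minContagious G r) : bootClosure G r A ≠ univ := by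
  intro h
  have : minContagious G r ≤ #A := Nat.sInf_le ⟨A, rfl, Fintype.card V, h⟩
  omega

variable {G} {I : Finset V}

theorem card_neighborFinset_inter_lt_of_notMem (hI : Function.IsFixedPt (bootStep G r) I)
    {u : V} (hu : u ∉ I) : #(G.neighborFinset u ∩ I) < r := by
  by_contra! h
  exact hu (hI ▸ mem_union_right _ (mem_filter.2 ⟨mem_univ u, h⟩))

theorem degree_add_card_add_one_lt_of_notMem (hI : Function.IsFixedPt (bootStep G r) I)
    {u : V} (hu : u ∉ I) : G.degree u + #I + 1 < Fintype.card V + r := by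
  have hsub : G.neighborFinset u ⊆ (G.neighborFinset u ∩ I) ∪ Iᶜ.erase u := by
    intro v hv
    by_cases hvI : v ∈ I
    · exact mem_union_left _ (mem_inter.2 ⟨hv, hvI⟩)
    · exact mem_union_right _
        (mem_erase.2 ⟨((G.mem_neighborFinset u v).1 hv).ne', mem_compl.2 hvI⟩)
  have hcompl : #(Iᶜ.erase u) + 1 = Fintype.card V - #I := by
    rw [card_erase_add_one (mem_compl.2 hu), card_compl]
  have hIu : #I < Fintype.card V := card_lt_univ_of_notMem hu
  have := (card_le_card hsub).trans (card_union_le _ _)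
  have := card_neighborFinset_inter_lt_of_notMem hI hu
  rw [G.card_neighborFinset_eq_degree] at *
  omega

theorem degree_add_card_nonadj_add_one_eq {w : V} (hw : w ∈ I) (hN : G.neighborFinset w ⊆ I) :
    G.degree w + #((I.erase w).filter (fun z => ¬ G.Adj w z)) + 1 = #I := by
  have hadj : (I.erase w).filter (G.Adj w) = G.neighborFinset w := by
    ext v
    simp only [mem_filter, mem_erase, SimpleGraph.mem_neighborFinset]
    exact ⟨fun h => h.2, fun h => ⟨⟨h.ne', hN ((G.mem_neighborFinset w v).2 h)⟩, h⟩⟩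
  rw [← G.card_neighborFinset_eq_degree, ← hadj, card_filter_add_card_filter_not,
    card_erase_add_one hw]

end Bootstrap

theorem stmt8_general {V : Type*} [Fintype V] (G : SimpleGraph V)
    (hdeg : ∀ x y : V, x ≠ y → ¬ G.Adj x y →
      Fintype.card V - 2 ≤ G.degree x + G.degree y)
    (hm : 2 < minContagious G 2)
    (I : Finset V)
    (hIcl : ∃ A : Finset V, A.card = 2 ∧ I = bootClosure G 2 A)
    (w : V) (hw : w ∈ I)
    (hwU : ∀ u ∈ Finset.univ \ I, ¬ G.Adj w u) :
    ((I.erase w).filter (fun z => ¬ G.Adj w z)).card ≤ 1 := by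
  obtain ⟨A, hA, rfl⟩ := hIcl
  obtain ⟨u, hu⟩ := not_forall.1 <| mt eq_univ_iff_forall.2 <|
    bootClosure_ne_univ_of_card_lt_minContagious (r := 2) G (by rwa [hA])
  have hwu : ¬ G.Adj w u := hwU u (mem_sdiff.2 ⟨mem_univ u, hu⟩)
  have hN : G.neighborFinset w ⊆ bootClosure G 2 A := fun v hv => by
    by_contra hv'
    exact hwU v (mem_sdiff.2 ⟨mem_univ v, hv'⟩) ((G.mem_neighborFinset w v).1 hv)
  have hdu := degree_add_card_add_one_lt_of_notMem (isFixedPt_bootStep_bootClosure G 2 A) hu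
  have hdw := degree_add_card_nonadj_add_one_eq hw hN
  have := hdeg w u (fun h => hu (h ▸ hw)) hwu
  omega

theorem stmt8 {V : Type*} [Fintype V] (G : SimpleGraph V)
    (hconn : G.Connected) (hn : 12 ≤ Fintype.card V)
    (hdeg : ∀ x y : V, x ≠ y → ¬ G.Adj x y →
      Fintype.card V - 2 ≤ G.degree x + G.degree y)
    (hm : 2 < minContagious G 2)
    (I : Finset V)
    (hIcl : ∃ A : Finset V, A.card = 2 ∧ I = bootClosure G 2 A)
    (hImax : ∀ A : Finset V, A.card = 2 → (bootClosure G 2 A).card ≤ I.card)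
    (w : V) (hw : w ∈ I)
    (hwU : ∀ u ∈ Finset.univ \ I, ¬ G.Adj w u) :
    ((I.erase w).filter (fun z => ¬ G.Adj w z)).card ≤ 1 :=
  stmt8_general G hdeg hm I hIcl w hw hwU
end
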